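/- There exist unrooted binary phylogenetic trees T and T' on a taxon set X and a common 3-chain K of T and T' such that some maximum agreement forest of T and T' does not preserve K. (Hence the statement that every maximum agreement forest preserves a common 4-chain cannot be strengthened from 4-chains to 3-chains.) -/

import Mathlib

/-!
Common definitions for formalizing statements about maximum agreement forests
of unrooted binary phylogenetic trees.

An unrooted binary phylogenetic forest on a taxon set `X` is modelled as a
finite acyclic simple graph together with a labelling of taxa by vertices,
such that the vertices of degree ≤ 1 are exactly the (injectively) labelled
leaves and every other vertex has degree 3.  A tree is a connected forest.
Two phylogenetic trees on the same taxon set are regarded as equal when there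
is a label-preserving isomorphism; accordingly, the condition `T|U = T'|U`
(equality of the restrictions obtained by suppressing degree-2 vertices) is
encoded by the classical equivalent condition that `T` and `T'` induce the
same quartet topologies on `U` (for binary trees on a common leaf set,
equality of restrictions is equivalent to agreement of all quartets, where a
quartet `wx|yz` holds iff the path from `w` to `x` is vertex-disjoint from
the path from `y` to `z`).
-/

namespace Phylo

/-- An unrooted binary phylogenetic forest on the taxon set `X`:
a disjoint union of unrooted binary phylogenetic trees whose leaf (taxon)
sets partition `X`. -/
structure PhyloForest (α : Type) (X : Finset α) where
  /-- the vertex type -/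
  V : Type
  /-- the vertex set is finite -/
  fintV : Fintype V
  /-- the underlying simple graph -/
  G : SimpleGraph V
  /-- the graph is acyclic -/
  acyclic : G.IsAcyclic
  /-- the labelling of taxa by vertices (only its values on `X` matter) -/
  label : α → V
  /-- taxa are labelled injectively -/
  label_injOn : Set.InjOn label (↑X : Set α)
  /-- the labelled vertices are exactly the vertices of degree ≤ 1
  (leaves; a degree-0 vertex is a single-vertex tree of the forest) -/
  leaves_eq : label '' (↑X : Set α) = {v : V | (G.neighborSet v).ncard ≤ 1}
  /-- every unlabelled (internal) vertex has degree 3 -/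
  internal_deg : ∀ v : V, v ∉ label '' (↑X : Set α) → (G.neighborSet v).ncard = 3

/-- An unrooted binary phylogenetic tree is a connected phylogenetic forest. -/
def PhyloForest.IsTree {α : Type} {X : Finset α} (A : PhyloForest α X) : Prop :=
  A.G.Connected

/-- The unique neighbour of a leaf `ℓ` (an arbitrary neighbour in general;
for a leaf of a phylogenetic forest the neighbour is unique). -/
noncomputable def parentIn {V : Type} (G : SimpleGraph V) (ℓ : V) : V :=
  letI := Classical.dec (∃ w, G.Adj ℓ w)
  if h : ∃ w, G.Adj ℓ w then h.choose else ℓ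

/-- `p_x`, the unique neighbour of the leaf labelled `x`. -/
noncomputable def PhyloForest.parent {α : Type} {X : Finset α} (A : PhyloForest α X)
    (x : α) : A.V :=
  parentIn A.G (A.label x)

/-- A list of vertices forms a path in `G`: consecutive vertices are adjacent
and all vertices are distinct. -/
def IsVertexPath {V : Type} (G : SimpleGraph V) (P : List V) : Prop :=
  P.Chain' G.Adj ∧ P.Nodup

/-- `K = (ℓ₁, …, ℓₙ)` is an `n`-chain with respect to the graph `G` and the
labelling `lab`: the taxa are distinct, `n ≥ 2`, and either
`(p_{ℓ₁}, …, p_{ℓₙ})` is a path, or `p_{ℓ₁} = p_{ℓ₂}` and `(p_{ℓ₂}, …, p_{ℓₙ})`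
is a path, or `p_{ℓ_{n-1}} = p_{ℓₙ}` and `(p_{ℓ₁}, …, p_{ℓ_{n-1}})` is a path
(the last case is phrased via the reversed list; a reversed path is a path). -/
def IsChainIn {α V : Type} (G : SimpleGraph V) (lab : α → V) (K : List α) : Prop :=
  2 ≤ K.length ∧ K.Nodup ∧
    (IsVertexPath G (K.map fun x => parentIn G (lab x)) ∨
      (∃ p q Q, K.map (fun x => parentIn G (lab x)) = p :: q :: Q ∧ p = q ∧
        IsVertexPath G (q :: Q)) ∨
      (∃ p q Q, (K.map fun x => parentIn G (lab x)).reverse = p :: q :: Q ∧ p = q ∧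
        IsVertexPath G (q :: Q)))

/-- `K` is an `n`-chain of the phylogenetic forest `A` (i.e. of one of its
trees). -/
def PhyloForest.IsChain {α : Type} {X : Finset α} (A : PhyloForest α X)
    (K : List α) : Prop :=
  (∀ x ∈ K, x ∈ X) ∧ IsChainIn A.G A.label K

/-- The chain `K` is pendant: `p_{ℓ₁} = p_{ℓ₂}` or `p_{ℓ_{n-1}} = p_{ℓₙ}`. -/
def IsPendantIn {α V : Type} (G : SimpleGraph V) (lab : α → V) (K : List α) : Prop :=
  (∃ x y L, K = x :: y :: L ∧ parentIn G (lab x) = parentIn G (lab y)) ∨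
  (∃ x y L, K.reverse = x :: y :: L ∧ parentIn G (lab x) = parentIn G (lab y))

/-- The chain `K` is pendant in the phylogenetic forest `A`. -/
def PhyloForest.ChainPendant {α : Type} {X : Finset α} (A : PhyloForest α X)
    (K : List α) : Prop :=
  IsPendantIn A.G A.label K

/-- The set of vertices lying on some path between `x` and `y` in `G`
(in a tree: the vertices of the unique path from `x` to `y`). -/
def vertsBetween {V : Type} (G : SimpleGraph V) (x y : V) : Set V :=
  {w | ∃ p : G.Walk x y, p.IsPath ∧ w ∈ p.support}

/-- The vertex set of the embedding `A[U]`: the minimal subtree of `A`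
connecting the leaves labelled by `U` (the union of all pairwise paths). -/
def embed {α : Type} {X : Finset α} (A : PhyloForest α X) (U : Finset α) :
    Set A.V :=
  ⋃ x ∈ U, ⋃ y ∈ U, vertsBetween A.G (A.label x) (A.label y)

/-- The embedding `A[U]` uses the edge `{u,v}`. -/
def embedUsesEdge {α : Type} {X : Finset α} (A : PhyloForest α X) (U : Finset α)
    (u v : A.V) : Prop :=
  ∃ x ∈ U, ∃ y ∈ U, ∃ p : A.G.Walk (A.label x) (A.label y),
    p.IsPath ∧ s(u, v) ∈ p.edges

/-- `A` displays the quartet `wx|yz`: the path between (the leaves labelled)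
`w` and `x` is vertex-disjoint from the path between `y` and `z`. -/
def Quartet {α : Type} {X : Finset α} (A : PhyloForest α X) (w x y z : α) : Prop :=
  Disjoint (vertsBetween A.G (A.label w) (A.label x))
    (vertsBetween A.G (A.label y) (A.label z))

/-- `A|U = B|U`: the restrictions of `A` and `B` to the taxon set `U` are equal
(as phylogenetic trees up to label-preserving isomorphism), encoded by the
classical equivalent condition that all quartet topologies on `U` agree. -/
def SameTopology {α : Type} {X : Finset α} (A B : PhyloForest α X)
    (U : Finset α) : Prop :=
  ∀ w x y z : α, w ∈ U → x ∈ U → y ∈ U → z ∈ U → ([w, x, y, z] : List α).Nodup →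
    (Quartet A w x y z ↔ Quartet B w x y z)

/-- All taxa of `U` lie in the same tree (connected component) of the forest
`A`. -/
def InOneTree {α : Type} {X : Finset α} (A : PhyloForest α X) (U : Finset α) : Prop :=
  ∀ x ∈ U, ∀ y ∈ U, A.G.Reachable (A.label x) (A.label y)

/-- `F` is a partition of the taxon set `X` (into nonempty blocks). -/
def IsPartitionOn {α : Type} (X : Finset α) (F : Finset (Finset α)) : Prop :=
  (∀ U ∈ F, U ⊆ X ∧ U.Nonempty) ∧
  (∀ U ∈ F, ∀ W ∈ F, U ≠ W → Disjoint U W) ∧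
  (∀ x ∈ X, ∃ U ∈ F, x ∈ U)

/-- `F` is an agreement forest for `A` and `B`: a partition of `X`, refining
the partition of `X` given by the trees of `A` and of `B`, such that
`A|U = B|U` for every block `U`, and the embeddings of distinct blocks are
vertex-disjoint in `A` and in `B`.  (When `A` and `B` are trees the refinement
conditions hold trivially and this is exactly the notion of an agreement
forest for two trees; when `B` is a forest these are exactly the agreement
forests reachable by cutting edges in `B`.) -/
def IsAgreementForest {α : Type} {X : Finset α} (A B : PhyloForest α X)
    (F : Finset (Finset α)) : Prop :=
  IsPartitionOn X F ∧
  (∀ U ∈ F, InOneTree A U ∧ InOneTree B U) ∧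
  (∀ U ∈ F, SameTopology A B U) ∧
  ∀ U ∈ F, ∀ W ∈ F, U ≠ W →
    Disjoint (embed A U) (embed A W) ∧ Disjoint (embed B U) (embed B W)

/-- `F` is a maximum agreement forest (an agreement forest of minimum size,
the size being the number of blocks). -/
def IsMAF {α : Type} {X : Finset α} (A B : PhyloForest α X)
    (F : Finset (Finset α)) : Prop :=
  IsAgreementForest A B F ∧
    ∀ F₂ : Finset (Finset α), IsAgreementForest A B F₂ → F.card ≤ F₂.card

/-- The partition `F` preserves the taxon set `K`: all taxa of `K` lie in a
single block of `F`. -/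
def Preserves {α : Type} (F : Finset (Finset α)) (K : Finset α) : Prop :=
  ∃ U ∈ F, K ⊆ U

/-- `{p, q}` is a cherry of `A`: two distinct taxa with a common parent. -/
def IsCherry {α : Type} {X : Finset α} (A : PhyloForest α X) (p q : α) : Prop :=
  p ≠ q ∧ p ∈ X ∧ q ∈ X ∧ A.parent p = A.parent q

/-- `A` has a 2-2-2 star on `a,b,c,d,e,f`: `(a,b)`, `(c,d)`, `(e,f)` are
2-chains and there is a vertex `v` whose three neighbours are exactly
`p_a, p_c, p_e` (pairwise distinct) and which is distinct from
`p_b, p_d, p_f`. -/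
def Star222 {α : Type} {X : Finset α} (A : PhyloForest α X)
    (a b c d e f : α) : Prop :=
  A.IsChain [a, b] ∧ A.IsChain [c, d] ∧ A.IsChain [e, f] ∧
  A.parent a ≠ A.parent c ∧ A.parent a ≠ A.parent e ∧ A.parent c ≠ A.parent e ∧
  ∃ v : A.V, A.G.neighborSet v = {A.parent a, A.parent c, A.parent e} ∧
    v ≠ A.parent b ∧ v ≠ A.parent d ∧ v ≠ A.parent f

/-- `A` has a 2-2-1 star on `a,b,c,d,e`: `(a,b)` and `(c,d)` are 2-chains and
there is a vertex `v` whose three neighbours are exactly `p_a, p_c, p_e`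
(pairwise distinct) and which is distinct from `p_b` and `p_d`. -/
def Star221 {α : Type} {X : Finset α} (A : PhyloForest α X)
    (a b c d e : α) : Prop :=
  A.IsChain [a, b] ∧ A.IsChain [c, d] ∧ e ∈ X ∧
  A.parent a ≠ A.parent c ∧ A.parent a ≠ A.parent e ∧ A.parent c ≠ A.parent e ∧
  ∃ v : A.V, A.G.neighborSet v = {A.parent a, A.parent c, A.parent e} ∧
    v ≠ A.parent b ∧ v ≠ A.parent d

/-- `A` has a 2-1-1 star on `a,b,c,d`: `(a,b)` is a 2-chain and there is a
vertex `v` whose three neighbours are exactly `p_a, p_c, p_d` (pairwise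
distinct) and which is distinct from `p_b`. -/
def Star211 {α : Type} {X : Finset α} (A : PhyloForest α X)
    (a b c d : α) : Prop :=
  A.IsChain [a, b] ∧ c ∈ X ∧ d ∈ X ∧
  A.parent a ≠ A.parent c ∧ A.parent a ≠ A.parent d ∧ A.parent c ≠ A.parent d ∧
  ∃ v : A.V, A.G.neighborSet v = {A.parent a, A.parent c, A.parent d} ∧
    v ≠ A.parent b

/-- The vertices on the `u`-side after deleting the edge `{u,v}`:
the pendant subtree detached by removing that edge (in a tree). -/
def pendantSide {V : Type} (G : SimpleGraph V) (u v : V) : Set V :=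
  {w | (G.deleteEdges {s(u, v)}).Reachable u w}

/-- The graph obtained from `G` by restricting to the vertex set `C` and
suppressing the degree-2 vertex `v`: vertices of `C` are adjacent if they were
adjacent in `G`, or if they are distinct common neighbours of `v`. -/
def suppressAt {V : Type} (G : SimpleGraph V) (C : Set V) (v : V) :
    SimpleGraph V where
  Adj x y := x ∈ C ∧ y ∈ C ∧ (G.Adj x y ∨ (G.Adj x v ∧ G.Adj v y ∧ x ≠ y))
  symm := by
    refine ⟨?_⟩
    rintro x y ⟨hx, hy, h | ⟨h1, h2, h3⟩⟩
    · exact ⟨hy, hx, Or.inl h.symm⟩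
    · exact ⟨hy, hx, Or.inr ⟨h2.symm, h1.symm, h3.symm⟩⟩
  loopless := by
    refine ⟨?_⟩
    rintro x ⟨-, -, h | ⟨-, -, h⟩⟩
    · exact G.irrefl h
    · exact h rfl

/-- `T` has an interrupted 4-chain `(a,b,c,d)` with interrupter edge `{u,v}`
and interrupter-subtree taxon set `B`: removing the edge `{u,v}` detaches a
pendant subtree (the `u`-side) whose taxon set is exactly `B`, with
`∅ ≠ B ⊆ X ∖ {a,b,c,d}`; the endpoint `v` outside the pendant subtree lies on
the path of `T` between `p_b` and `p_c`; and `(a,b,c,d)` is a 4-chain of the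
tree obtained from `T` by deleting the pendant subtree together with the edge
`{u,v}` and suppressing the resulting degree-2 vertex `v`. -/
def HasInterrupter {α : Type} {X : Finset α} (T : PhyloForest α X)
    (a b c d : α) (B : Finset α) (u v : T.V) : Prop :=
  a ∈ X ∧ b ∈ X ∧ c ∈ X ∧ d ∈ X ∧
  B.Nonempty ∧ (↑B : Set α) ⊆ (↑X : Set α) \ {a, b, c, d} ∧
  T.G.Adj u v ∧ v ∉ pendantSide T.G u v ∧
  (∀ x ∈ X, (T.label x ∈ pendantSide T.G u v ↔ x ∈ B)) ∧
  v ∈ vertsBetween T.G (T.parent b) (T.parent c) ∧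
  IsChainIn (suppressAt T.G ((pendantSide T.G u v)ᶜ \ {v}) v) T.label [a, b, c, d]

/-! The quartet trees `12|34` and `13|24` disagree on their only quartet, so every agreement
forest of them has at least two blocks, and `{{1}, {2, 3, 4}}` is one: a block of three taxa
carries no quartet, and a leaf lies on no path between other leaves. It separates `1` from `2`,
although `(2, 1, 3)` is a common 3-chain, pendant at its start in the first tree and at its end
in the second. -/

open SimpleGraph

section Paths

variable {V : Type} {G : SimpleGraph V}

theorem vertsBetween_eq_support (hG : G.IsAcyclic) {x y : V} {p : G.Walk x y}
    (hp : p.IsPath) : vertsBetween G x y = {w | w ∈ p.support} := by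
  ext w
  refine ⟨fun ⟨q, hq, hw⟩ => ?_, fun hw => ⟨p, hp, hw⟩⟩
  have hqp : q = p := congrArg Subtype.val ((hG.subsingleton_path x y).elim ⟨q, hq⟩ ⟨p, hp⟩)
  exact hqp ▸ hw

theorem vertsBetween_self (v : V) : vertsBetween G v v = {v} := by
  ext w
  refine ⟨fun ⟨p, hp, hw⟩ => ?_, fun hw => ⟨.nil, .nil, by simpa using hw⟩⟩
  rw [Walk.nil_iff_support_eq.1 (Walk.isPath_iff_nil.1 hp)] at hw
  simpa using hw

-- An interior vertex of a path has two distinct neighbours on it.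
theorem notMem_vertsBetween_of_subsingleton {x y w : V}
    (hw : (G.neighborSet w).Subsingleton) (hwx : w ≠ x) (hwy : w ≠ y) :
    w ∉ vertsBetween G x y := by
  classical
  rintro ⟨p, hp, hwp⟩
  set q := p.takeUntil w hwp
  set r := p.dropUntil w hwp
  have hq : ¬ q.Nil := Walk.not_nil_of_ne hwx.symm
  have hr : ¬ r.Nil := Walk.not_nil_of_ne hwy
  have hnd : (q.support ++ r.support.tail).Nodup := by
    rw [← Walk.support_append, p.take_spec hwp]
    exact hp.support_nodup
  have hsame : q.penultimate = r.snd := hw (Walk.adj_penultimate hq).symm (Walk.adj_snd hr)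
  exact List.disjoint_of_nodup_append hnd (q.getVert_mem_support _)
    (hsame ▸ Walk.snd_mem_tail_support hr)

theorem parentIn_eq_of_adj {ℓ u : V} (hu : G.Adj ℓ u) (huniq : ∀ w, G.Adj ℓ w → w = u) :
    parentIn G ℓ = u := by
  rw [parentIn, dif_pos ⟨u, hu⟩]
  exact huniq _ (Exists.choose_spec _)

theorem IsVertexPath.reverse {P : List V} (h : IsVertexPath G P) : IsVertexPath G P.reverse :=
  ⟨List.isChain_reverse.2 (h.1.imp fun _ _ hab => hab.symm), List.nodup_reverse.2 h.2⟩

theorem IsChainIn.reverse {α : Type} {lab : α → V} {K : List α} (h : IsChainIn G lab K) :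
    IsChainIn G lab K.reverse := by
  obtain ⟨hlen, hnd, hpath | ⟨p, q, Q, hK, hpq, hQ⟩ | ⟨p, q, Q, hK, hpq, hQ⟩⟩ := h
  all_goals refine ⟨by simpa using hlen, List.nodup_reverse.2 hnd, ?_⟩
  all_goals rw [List.map_reverse]
  · exact Or.inl hpath.reverse
  · exact Or.inr (Or.inr ⟨p, q, Q, by rw [List.reverse_reverse, hK], hpq, hQ⟩)
  · exact Or.inr (Or.inl ⟨p, q, Q, hK, hpq, hQ⟩)

end Paths

namespace PhyloForest

variable {α : Type} {X : Finset α}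

theorem IsChain.reverse {A : PhyloForest α X} {K : List α} (h : A.IsChain K) :
    A.IsChain K.reverse :=
  ⟨fun x hx => h.1 x (List.mem_reverse.1 hx), h.2.reverse⟩

theorem IsTree.inOneTree {A : PhyloForest α X} (hA : A.IsTree) (U : Finset α) :
    InOneTree A U :=
  fun _ _ _ _ => hA.preconnected _ _

variable (A : PhyloForest α X)

theorem neighborSet_label_subsingleton {x : α} (hx : x ∈ X) :
    (A.G.neighborSet (A.label x)).Subsingleton := by
  have := A.fintV
  have hleaf : A.label x ∈ {v | (A.G.neighborSet v).ncard ≤ 1} :=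
    A.leaves_eq ▸ ⟨x, hx, rfl⟩
  exact Set.ncard_le_one_iff_subsingleton.1 hleaf

theorem embed_singleton (x : α) : embed A {x} = {A.label x} := by
  simp [embed, vertsBetween_self]

theorem label_notMem_embed {x : α} (hx : x ∈ X) {U : Finset α} (hU : U ⊆ X) (hxU : x ∉ U) :
    A.label x ∉ embed A U := by
  have hne : ∀ y ∈ U, A.label x ≠ A.label y := fun y hy =>
    A.label_injOn.ne hx (hU hy) (ne_of_mem_of_not_mem hy hxU).symm
  simp only [embed, Set.mem_iUnion]
  rintro ⟨y, hy, z, hz, h⟩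
  exact notMem_vertsBetween_of_subsingleton (A.neighborSet_label_subsingleton hx)
    (hne y hy) (hne z hz) h

theorem disjoint_embed_singleton {x : α} (hx : x ∈ X) {U : Finset α} (hU : U ⊆ X)
    (hxU : x ∉ U) : Disjoint (embed A {x}) (embed A U) := by
  rw [embed_singleton, Set.disjoint_singleton_left]
  exact A.label_notMem_embed hx hU hxU

end PhyloForest

section AgreementForest

variable {α : Type} {X : Finset α} {A B : PhyloForest α X}

theorem sameTopology_of_card_lt_four {U : Finset α} (hU : U.card < 4) : SameTopology A B U := by
  classical
  intro w x y z hw hx hy hz hnd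
  have hsub : ([w, x, y, z] : List α).toFinset ⊆ U := by
    intro v hv
    simp only [List.mem_toFinset, List.mem_cons, List.not_mem_nil, or_false] at hv
    rcases hv with rfl | rfl | rfl | rfl <;> assumption
  have h4 := List.toFinset_card_of_nodup hnd ▸ Finset.card_le_card hsub
  simp only [List.length_cons, List.length_nil] at h4
  omega

theorem not_sameTopology_of_quartet {w x y z : α} (hw : w ∈ X) (hx : x ∈ X) (hy : y ∈ X)
    (hz : z ∈ X) (hnd : [w, x, y, z].Nodup) (hA : Quartet A w x y z)
    (hB : ¬ Quartet B w x y z) : ¬ SameTopology A B X :=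
  fun h => hB ((h w x y z hw hx hy hz hnd).1 hA)

theorem isAgreementForest_singleton_erase [DecidableEq α] (hA : A.IsTree) (hB : B.IsTree)
    {x : α} (hx : x ∈ X) (hX : (X.erase x).Nonempty) (hS : SameTopology A B (X.erase x)) :
    IsAgreementForest A B {{x}, X.erase x} := by
  have hsplit : ∀ R : Finset α → Finset α → Prop,
      R {x} (X.erase x) → R (X.erase x) {x} →
      ∀ U ∈ ({{x}, X.erase x} : Finset (Finset α)), ∀ W ∈ ({{x}, X.erase x} : Finset _),
        U ≠ W → R U W := by
    intro R h₁ h₂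
    simp only [Finset.mem_insert, Finset.mem_singleton]
    rintro U (rfl | rfl) W (rfl | rfl) hne
    exacts [absurd rfl hne, h₁, h₂, absurd rfl hne]
  have hdisj : Disjoint ({x} : Finset α) (X.erase x) :=
    Finset.disjoint_singleton_left.2 (Finset.notMem_erase x X)
  have hembed (C : PhyloForest α X) : Disjoint (embed C {x}) (embed C (X.erase x)) :=
    C.disjoint_embed_singleton hx (Finset.erase_subset x X) (Finset.notMem_erase x X)
  refine ⟨⟨?_, ?_, ?_⟩, fun U _ => ⟨hA.inOneTree U, hB.inOneTree U⟩, ?_, ?_⟩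
  · simp only [Finset.mem_insert, Finset.mem_singleton]
    rintro U (rfl | rfl)
    exacts [⟨Finset.singleton_subset_iff.2 hx, Finset.singleton_nonempty x⟩,
      ⟨Finset.erase_subset x X, hX⟩]
  · exact hsplit _ hdisj hdisj.symm
  · intro y hy
    by_cases hyx : y = x
    · exact ⟨{x}, by simp, by simp [hyx]⟩
    · exact ⟨X.erase x, by simp, Finset.mem_erase.2 ⟨hyx, hy⟩⟩
  · simp only [Finset.mem_insert, Finset.mem_singleton]
    rintro U (rfl | rfl)
    exacts [sameTopology_of_card_lt_four (by simp), hS]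
  · exact hsplit _ ⟨hembed A, hembed B⟩ ⟨(hembed A).symm, (hembed B).symm⟩

theorem two_le_card_of_not_sameTopology {F : Finset (Finset α)} (hF : IsAgreementForest A B F)
    (hX : ¬ SameTopology A B X) : 2 ≤ F.card := by
  by_contra! hF1
  apply hX
  intro w x y z hw hx hy hz
  obtain ⟨⟨-, -, hcover⟩, -, hS, -⟩ := hF
  obtain ⟨U, hU, -⟩ := hcover w hw
  have hXU : X ⊆ U := fun v hv => by
    obtain ⟨U', hU', hvU'⟩ := hcover v hv
    rwa [Finset.card_le_one.1 (by omega) U' hU' U hU] at hvU'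
  exact hS U hU w x y z (hXU hw) (hXU hx) (hXU hy) (hXU hz)

theorem isMAF_of_card_eq_two {F : Finset (Finset α)} (hF : IsAgreementForest A B F)
    (hcard : F.card = 2) (hX : ¬ SameTopology A B X) : IsMAF A B F :=
  ⟨hF, fun _ hF₂ => hcard ▸ two_le_card_of_not_sameTopology hF₂ hX⟩

end AgreementForest

section QuartetTree

def quartetGraph : SimpleGraph (Fin 6) :=
  fromEdgeSet ↑({s(0, 4), s(1, 4), s(2, 5), s(3, 5), s(4, 5)} : Finset (Sym2 (Fin 6)))

instance : DecidableRel quartetGraph.Adj :=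
  inferInstanceAs (DecidableRel (fromEdgeSet _).Adj)

theorem quartetGraph_isTree : quartetGraph.IsTree := by
  refine isTree_iff_connected_and_card.2 ⟨⟨by decide⟩, ?_⟩
  rw [Nat.card_eq_fintype_card, Nat.card_eq_fintype_card]
  decide

theorem quartetGraph_leaves :
    {v | (quartetGraph.neighborSet v).ncard ≤ 1} = ({0, 1, 2, 3} : Set (Fin 6)) := by
  ext v
  show _ ≤ 1 ↔ _
  rw [Set.ncard_eq_toFinset_card']
  revert v
  decide

theorem quartetGraph_internal (v : Fin 6) (hv : v ∉ ({0, 1, 2, 3} : Set (Fin 6))) :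
    (quartetGraph.neighborSet v).ncard = 3 := by
  rw [Set.ncard_eq_toFinset_card']
  revert v
  decide

variable {α : Type} [DecidableEq α]

def quartetLabel (a b c : α) (x : α) : Fin 6 :=
  if x = a then 0 else if x = b then 1 else if x = c then 2 else 3

variable {a b c d : α}

theorem quartetLabel_eq (hnd : [a, b, c, d].Nodup) :
    quartetLabel a b c a = 0 ∧ quartetLabel a b c b = 1 ∧ quartetLabel a b c c = 2 ∧
      quartetLabel a b c d = 3 := by
  obtain ⟨⟨hab, hac, had⟩, ⟨hbc, hbd⟩, hcd⟩ :
      (a ≠ b ∧ a ≠ c ∧ a ≠ d) ∧ (b ≠ c ∧ b ≠ d) ∧ c ≠ d := by simpa using hnd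
  simp [quartetLabel, hab.symm, hac.symm, had.symm, hbc.symm, hbd.symm, hcd.symm]

theorem quartetLabel_injOn (hnd : [a, b, c, d].Nodup) :
    Set.InjOn (quartetLabel a b c) ↑({a, b, c, d} : Finset α) := by
  obtain ⟨ha, hb, hc, hd⟩ := quartetLabel_eq hnd
  simp only [Finset.coe_insert, Finset.coe_singleton, Set.InjOn, Set.mem_insert_iff,
    Set.mem_singleton_iff]
  rintro x (rfl | rfl | rfl | rfl) y (rfl | rfl | rfl | rfl) <;> simp [ha, hb, hc, hd]

theorem quartetLabel_image (hnd : [a, b, c, d].Nodup) :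
    quartetLabel a b c '' ↑({a, b, c, d} : Finset α) = {0, 1, 2, 3} := by
  obtain ⟨ha, hb, hc, hd⟩ := quartetLabel_eq hnd
  simp only [Finset.coe_insert, Finset.coe_singleton, Set.image_insert_eq, Set.image_singleton,
    ha, hb, hc, hd]

-- The quartet tree `ab|cd`: `a, b` hang at the internal vertex `4`, `c, d` at `5`.
def quartetTree (X : Finset α) (a b c d : α) (hX : X = {a, b, c, d}) (hnd : [a, b, c, d].Nodup) :
    PhyloForest α X where
  V := Fin 6
  fintV := inferInstance
  G := quartetGraph
  acyclic := quartetGraph_isTree.isAcyclic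
  label := quartetLabel a b c
  label_injOn := hX ▸ quartetLabel_injOn hnd
  leaves_eq := by rw [hX, quartetLabel_image hnd, quartetGraph_leaves]
  internal_deg v hv := by
    subst hX
    exact quartetGraph_internal v (quartetLabel_image hnd ▸ hv)

variable {X : Finset α} {hX : X = {a, b, c, d}} {hnd : [a, b, c, d].Nodup}

theorem quartetTree_isTree : (quartetTree X a b c d hX hnd).IsTree :=
  quartetGraph_isTree.connected

theorem quartetTree_isChain : (quartetTree X a b c d hX hnd).IsChain [b, a, c] := by
  obtain ⟨ha, hb, hc, -⟩ := quartetLabel_eq hnd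
  have hp0 : parentIn quartetGraph 0 = 4 := parentIn_eq_of_adj (by decide) (by decide)
  have hp1 : parentIn quartetGraph 1 = 4 := parentIn_eq_of_adj (by decide) (by decide)
  have hp2 : parentIn quartetGraph 2 = 5 := parentIn_eq_of_adj (by decide) (by decide)
  refine ⟨by simp [hX], ?_⟩
  show IsChainIn quartetGraph (quartetLabel a b c) [b, a, c]
  refine ⟨by simp, ?_, Or.inr (Or.inl ⟨4, 4, [5], ?_, rfl, ?_⟩)⟩
  · simp only [List.nodup_cons, List.mem_cons] at hnd ⊢
    tauto
  · simp [ha, hb, hc, hp0, hp1, hp2]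
  · exact ⟨List.isChain_pair.2 (by decide), by decide⟩

theorem quartetTree_quartet : Quartet (quartetTree X a b c d hX hnd) a b c d := by
  obtain ⟨ha, hb, hc, hd⟩ := quartetLabel_eq hnd
  let p : quartetGraph.Walk 0 1 :=
    .cons (by decide : quartetGraph.Adj 0 4) (.cons (by decide : quartetGraph.Adj 4 1) .nil)
  let q : quartetGraph.Walk 2 3 :=
    .cons (by decide : quartetGraph.Adj 2 5) (.cons (by decide : quartetGraph.Adj 5 3) .nil)
  have hp : p.IsPath := by rw [Walk.isPath_def]; decide
  have hq : q.IsPath := by rw [Walk.isPath_def]; decide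
  show Disjoint (vertsBetween quartetGraph (quartetLabel a b c a) (quartetLabel a b c b))
    (vertsBetween quartetGraph (quartetLabel a b c c) (quartetLabel a b c d))
  rw [ha, hb, hc, hd, vertsBetween_eq_support quartetGraph_isTree.isAcyclic hp,
    vertsBetween_eq_support quartetGraph_isTree.isAcyclic hq, Set.disjoint_left]
  decide

theorem quartetTree_not_quartet : ¬ Quartet (quartetTree X a b c d hX hnd) a c b d := by
  obtain ⟨ha, hb, hc, hd⟩ := quartetLabel_eq hnd
  let p : quartetGraph.Walk 0 2 := .cons (by decide : quartetGraph.Adj 0 4)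
    (.cons (by decide : quartetGraph.Adj 4 5) (.cons (by decide : quartetGraph.Adj 5 2) .nil))
  let q : quartetGraph.Walk 1 3 := .cons (by decide : quartetGraph.Adj 1 4)
    (.cons (by decide : quartetGraph.Adj 4 5) (.cons (by decide : quartetGraph.Adj 5 3) .nil))
  have hp : p.IsPath := by rw [Walk.isPath_def]; decide
  have hq : q.IsPath := by rw [Walk.isPath_def]; decide
  show ¬ Disjoint (vertsBetween quartetGraph (quartetLabel a b c a) (quartetLabel a b c c))
    (vertsBetween quartetGraph (quartetLabel a b c b) (quartetLabel a b c d))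
  rw [ha, hb, hc, hd, Set.not_disjoint_iff]
  exact ⟨4, ⟨p, hp, by decide⟩, ⟨q, hq, by decide⟩⟩

end QuartetTree

/-- There exist unrooted binary phylogenetic trees `T` and
`T'` on a taxon set `X` and a common 3-chain `K` of `T` and `T'` such that
some maximum agreement forest of `T` and `T'` does not preserve `K`.  (Hence
the statement that every maximum agreement forest preserves a common 4-chain
cannot be strengthened from 4-chains to 3-chains.) -/
theorem exists_three_chain_not_preserved_by_some_MAF :
    ∃ (X : Finset ℕ) (T T' : PhyloForest ℕ X) (K : List ℕ),
      T.IsTree ∧ T'.IsTree ∧ K.length = 3 ∧ T.IsChain K ∧ T'.IsChain K ∧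
      ∃ F : Finset (Finset ℕ), IsMAF T T' F ∧ ¬ Preserves F K.toFinset := by
  let X : Finset ℕ := {1, 2, 3, 4}
  let T := quartetTree X 1 2 3 4 rfl (by decide)
  let T' := quartetTree X 1 3 2 4 (by decide) (by decide)
  have hAF : IsAgreementForest T T' {{1}, X.erase 1} :=
    isAgreementForest_singleton_erase quartetTree_isTree quartetTree_isTree (by decide)
      (by decide) (sameTopology_of_card_lt_four (by decide))
  have hX : ¬ SameTopology T T' X :=
    not_sameTopology_of_quartet (by decide) (by decide) (by decide) (by decide) (by decide)
      quartetTree_quartet quartetTree_not_quartet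
  exact ⟨X, T, T', [2, 1, 3], quartetTree_isTree, quartetTree_isTree, rfl,
    quartetTree_isChain, quartetTree_isChain.reverse, _,
    isMAF_of_card_eq_two hAF (by decide) hX, by unfold Preserves; decide⟩

end Phylo
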